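/- Let A = ⟨Q, Σ, I, δ, F⟩ be a fuzzy automaton over a linear complete residuated lattice, ε ∈ L, and Z an ε-FPO on Q that is a right ε-invariance on A (Z ∘ F_w =_ε F_w for all w ∈ Σ*). Then the (Z,ε)-afterset fuzzy automaton A_{Z,ε} is ε-equivalent to A: for every word w ∈ Σ*, L(A_{Z,ε})(w) =_ε L(A)(w). -/

import Mathlib

/-- A linear and complete residuated lattice: a complete linear order carrying a
commutative monoid structure whose unit `1` is the greatest element, together with a
residuum satisfying the adjunction property. -/
class ResiduatedLattice (L : Type*) extends CompleteLinearOrder L, CommMonoid L where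
  res : L → L → L
  adjunction : ∀ x y z : L, x * y ≤ z ↔ x ≤ res y z
  one_eq_top : (1 : L) = ⊤

variable {L : Type*} [ResiduatedLattice L]

/-- `x ≤_ε y` iff `x ≤ y` or `x ≤ ε`. -/
def leE (ε x y : L) : Prop := x ≤ y ∨ x ≤ ε

/-- `x =_ε y` iff `x ≤_ε y` and `y ≤_ε x`. -/
def eqE (ε x y : L) : Prop := leE ε x y ∧ leE ε y x

/-- `x ⊗_ε y` is `x ⊗ y` if `x ⊗ y > ε`, and `ε` otherwise. -/
def mulE (ε x y : L) : L := if ε < x * y then x * y else ε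

/-- `x →_ε y := (x ∨ ε) → (y ∨ ε)`. -/
def resE (ε x y : L) : L := ResiduatedLattice.res (x ⊔ ε) (y ⊔ ε)

/-- Composition of fuzzy relations: `(r ∘ s)(a,b) = sup_c r(a,c) ⊗ s(c,b)`. -/
noncomputable def relComp {X : Type*} (r s : X → X → L) : X → X → L :=
  fun a b => ⨆ c, r a c * s c b

/-- `ε`-composition of fuzzy relations:
`(r ∘_ε s)(a,b) = ⋁_ε { r(a,c) ⊗_ε s(c,b) : c ∈ X }`. -/
noncomputable def relCompE {X : Type*} (ε : L) (r s : X → X → L) : X → X → L :=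
  fun a b => (⨆ c, mulE ε (r a c) (s c b)) ⊔ ε

/-- The `ε`-truncation of a fuzzy relation. -/
def truncRel {X : Type*} (ε : L) (r : X → X → L) : X → X → L :=
  fun a b => if ε < r a b then r a b else ε

/-- A fuzzy `ε`-pre-order (`ε`-FPO) on `X`: a fuzzy relation that is reflexive,
`ε`-transitive, and equal to its own `ε`-truncation. -/
def IsEFPO {X : Type*} (ε : L) (r : X → X → L) : Prop :=
  (∀ x, r x x = 1) ∧
  (∀ a b, leE ε (relCompE ε r r a b) (r a b)) ∧
  truncRel ε r = r

/-- A fuzzy automaton over `L` with state set `Q` and alphabet `S`. -/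
structure FuzzyAutomaton (L : Type*) (Q S : Type*) where
  I : Q → L
  δ : Q → S → Q → L
  F : Q → L

open scoped Classical in
/-- The fuzzy relation `δ_w` of a word `w`. -/
noncomputable def deltaWord {Q S : Type*} (M : FuzzyAutomaton L Q S) :
    List S → Q → Q → L
  | [] => fun p q => if p = q then (1 : L) else ⊥
  | σ :: u => fun p q => ⨆ r, M.δ p σ r * deltaWord M u r q

/-- `F_w := δ_w ∘ F`. -/
noncomputable def Fword {Q S : Type*} (M : FuzzyAutomaton L Q S) (w : List S) : Q → L :=
  fun q => ⨆ p, deltaWord M w q p * M.F p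

/-- `Z` is a right `ε`-invariance on `M`: `Z` is reflexive and `Z ∘ F_w =_ε F_w`
for every word `w`. -/
noncomputable def RightEInv {Q S : Type*} (M : FuzzyAutomaton L Q S) (ε : L)
    (Z : Q → Q → L) : Prop :=
  (∀ q, Z q q = 1) ∧
  ∀ w : List S, ∀ q, eqE ε (⨆ p, Z q p * Fword M w p) (Fword M w q)

/-- The fuzzy language recognized by `M`: `L(M)(w) = I ∘ δ_w ∘ F`. -/
noncomputable def lang {Q S : Type*} (M : FuzzyAutomaton L Q S) (w : List S) : L :=
  ⨆ p, ⨆ q, M.I p * deltaWord M w p q * M.F q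

/-- The `(Z,ε)`-afterset fuzzy automaton of `M`, with each afterset `Z_q` represented by
the state `q` (states with equal aftersets carry identical initial, transition, and final
degrees, so this representative-based automaton recognizes the same fuzzy language as the
quotient automaton on `Q/Z`):
`I'(Z_q) = I ∘_ε Z^q`, `δ'(Z_q,σ,Z_p) = Z_q ∘_ε δ_σ ∘_ε Z^p`, `F'(Z_p) = Z_p ∘_ε F`. -/
noncomputable def aftersetAut {Q S : Type*} (M : FuzzyAutomaton L Q S) (ε : L)
    (Z : Q → Q → L) : FuzzyAutomaton L Q S where
  I := fun q => (⨆ p, mulE ε (M.I p) (Z p q)) ⊔ ε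
  δ := fun q σ p =>
    (⨆ t, mulE ε ((⨆ s, mulE ε (Z q s) (M.δ s σ t)) ⊔ ε) (Z t p)) ⊔ ε
  F := fun p => (⨆ s, mulE ε (Z p s) (M.F s)) ⊔ ε

/-!
Write `x ≤ y ⊔ ε` for `x ≤_ε y`. Since `ε ⊗ x ≤ ε`, the map `x ↦ x ⊔ ε` is compatible with
`⊗` and with suprema, so every state degree of the afterset automaton is the ε-closure of
the corresponding ordinary composition: `I' = (I ∘ Z) ⊔ ε`, `δ'_σ = (Z ∘ δ_σ ∘ Z) ⊔ ε`,
`F' = (Z ∘ F) ⊔ ε`. Right ε-invariance `Z ∘ F_w ≤ F_w ⊔ ε` lets each trailing `Z` be absorbed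
into the following `F_w`, and by induction on `w` this gives `F'_w ≤ F_w ⊔ ε`, hence
`L(A') ≤ L(A) ⊔ ε`. Conversely reflexivity of `Z` makes `I ≤ I'`, `δ ≤ δ'`, `F ≤ F'`, so
`L(A) ≤ L(A')`.
-/

namespace ResiduatedLattice

lemma le_one (a : L) : a ≤ 1 := one_eq_top (L := L) ▸ le_top

lemma gc_mul_res (y : L) : GaloisConnection (· * y) (res y) :=
  fun x z => adjunction x y z

instance : IsQuantale L where
  mul_sSup_distrib x s := by simpa only [mul_comm x] using (gc_mul_res x).l_sSup (s := s)
  sSup_mul_distrib s y := (gc_mul_res y).l_sSup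

end ResiduatedLattice

open ResiduatedLattice Quantale

lemma leE_iff_le_sup {ε x y : L} : leE ε x y ↔ x ≤ y ⊔ ε := le_sup_iff.symm

lemma mulE_eq_mul_sup (ε x y : L) : mulE ε x y = x * y ⊔ ε := by
  unfold mulE
  split_ifs with h
  · exact (sup_of_le_left h.le).symm
  · exact (sup_of_le_right (not_lt.mp h)).symm

lemma iSup_sup_sup_eq {α : Type*} [CompleteLattice α] {ι : Sort*} (f : ι → α) (ε : α) :
    (⨆ i, f i ⊔ ε) ⊔ ε = (⨆ i, f i) ⊔ ε := by
  rw [iSup_sup_eq, sup_assoc, sup_of_le_right iSup_const_le]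

lemma sup_mul_sup_eq (a b ε : L) : (a ⊔ ε) * b ⊔ ε = a * b ⊔ ε := by
  rw [sup_mul_distrib, sup_assoc, sup_of_le_right (mul_le_of_le_one_right' (le_one b))]

lemma mul_sup_le (a b ε : L) : a * (b ⊔ ε) ≤ a * b ⊔ ε := by
  rw [mul_sup_distrib]
  exact sup_le_sup_left (mul_le_of_le_one_left' (le_one a)) _

lemma sup_mul_sup_le (a b ε : L) : (a ⊔ ε) * (b ⊔ ε) ≤ a * b ⊔ ε := by
  rw [sup_mul_distrib]
  exact sup_le (mul_sup_le a b ε) (le_sup_of_le_right (mul_le_of_le_one_right' (le_one _)))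

lemma iSup_iSup_mul_assoc {α : Type*} [Semigroup α] [CompleteLattice α] [IsQuantale α]
    {ι κ : Type*} (a : ι → α) (R : ι → κ → α) (g : κ → α) :
    ⨆ k, (⨆ i, a i * R i k) * g k = ⨆ i, a i * ⨆ k, R i k * g k := by
  simp_rw [iSup_mul_distrib, mul_iSup_distrib, mul_assoc]
  exact iSup_comm

lemma iSup_mul_le_of_invariant {ι : Type*} {ε : L} {Z : ι → ι → L} {G : ι → L}
    (hZ : ∀ t, ⨆ p, Z t p * G p ≤ G t ⊔ ε) {a a' g : ι → L}
    (ha' : ∀ p, a' p ≤ (⨆ t, a t * Z t p) ⊔ ε) (hg : ∀ p, g p ≤ G p ⊔ ε) :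
    ⨆ p, a' p * g p ≤ (⨆ t, a t * G t) ⊔ ε :=
  calc ⨆ p, a' p * g p
      ≤ ⨆ p, (⨆ t, a t * Z t p) * G p ⊔ ε :=
        iSup_mono fun p => (mul_le_mul' (ha' p) (hg p)).trans (sup_mul_sup_le _ _ _)
    _ ≤ (⨆ p, (⨆ t, a t * Z t p) * G p) ⊔ ε :=
        iSup_le fun p => sup_le_sup_right (le_iSup (fun p => (⨆ t, a t * Z t p) * G p) p) ε
    _ = (⨆ t, a t * ⨆ p, Z t p * G p) ⊔ ε := by rw [iSup_iSup_mul_assoc]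
    _ ≤ (⨆ t, a t * G t ⊔ ε) ⊔ ε :=
        sup_le_sup_right
          (iSup_mono fun t => (mul_le_mul_right (hZ t) _).trans (mul_sup_le _ _ _)) ε
    _ = (⨆ t, a t * G t) ⊔ ε := iSup_sup_sup_eq _ _

section Automaton

variable {Q S : Type*}

lemma Fword_nil (M : FuzzyAutomaton L Q S) (q : Q) : Fword M [] q = M.F q := by
  simp [Fword, deltaWord, iSup_ite]

lemma Fword_cons (M : FuzzyAutomaton L Q S) (σ : S) (u : List S) (q : Q) :
    Fword M (σ :: u) q = ⨆ r, M.δ q σ r * Fword M u r := by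
  simp only [Fword, deltaWord, iSup_mul_distrib, mul_iSup_distrib, mul_assoc]
  exact iSup_comm

lemma lang_eq_iSup_mul_Fword (M : FuzzyAutomaton L Q S) (w : List S) :
    lang M w = ⨆ p, M.I p * Fword M w p := by
  simp only [lang, Fword, mul_iSup_distrib, mul_assoc]

lemma Fword_mono {M N : FuzzyAutomaton L Q S} (hδ : ∀ q σ p, M.δ q σ p ≤ N.δ q σ p)
    (hF : ∀ q, M.F q ≤ N.F q) : ∀ w q, Fword M w q ≤ Fword N w q
  | [], q => by simpa only [Fword_nil] using hF q
  | σ :: u, q => by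
    simp only [Fword_cons]
    exact iSup_mono fun r => mul_le_mul' (hδ q σ r) (Fword_mono hδ hF u r)

lemma lang_mono {M N : FuzzyAutomaton L Q S} (hI : ∀ q, M.I q ≤ N.I q)
    (hδ : ∀ q σ p, M.δ q σ p ≤ N.δ q σ p) (hF : ∀ q, M.F q ≤ N.F q) (w : List S) :
    lang M w ≤ lang N w := by
  simp only [lang_eq_iSup_mul_Fword]
  exact iSup_mono fun p => mul_le_mul' (hI p) (Fword_mono hδ hF w p)

section Afterset

variable (M : FuzzyAutomaton L Q S) (ε : L) (Z : Q → Q → L)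

lemma aftersetAut_I (p : Q) : (aftersetAut M ε Z).I p = (⨆ s, M.I s * Z s p) ⊔ ε := by
  simp only [aftersetAut, mulE_eq_mul_sup, iSup_sup_sup_eq]

lemma aftersetAut_δ (q : Q) (σ : S) (p : Q) :
    (aftersetAut M ε Z).δ q σ p = (⨆ t, (⨆ s, Z q s * M.δ s σ t) * Z t p) ⊔ ε := by
  simp only [aftersetAut, mulE_eq_mul_sup, iSup_sup_sup_eq, sup_mul_sup_eq]

lemma aftersetAut_F (p : Q) : (aftersetAut M ε Z).F p = (⨆ s, Z p s * M.F s) ⊔ ε := by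
  simp only [aftersetAut, mulE_eq_mul_sup, iSup_sup_sup_eq]

variable {M ε Z}

lemma lang_le_lang_aftersetAut (hZ : ∀ q, Z q q = 1) (w : List S) :
    lang M w ≤ lang (aftersetAut M ε Z) w := by
  refine lang_mono (fun p => ?_) (fun q σ p => ?_) (fun p => ?_) w
  · rw [aftersetAut_I]
    exact le_sup_of_le_left (le_iSup_of_le p (by rw [hZ p, mul_one]))
  · rw [aftersetAut_δ]
    refine le_sup_of_le_left (le_iSup_of_le p ?_)
    rw [hZ p, mul_one]
    exact le_iSup_of_le q (by rw [hZ q, one_mul])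
  · rw [aftersetAut_F]
    exact le_sup_of_le_left (le_iSup_of_le p (by rw [hZ p, one_mul]))

variable (hinv : ∀ w q, ⨆ p, Z q p * Fword M w p ≤ Fword M w q ⊔ ε)
include hinv

lemma Fword_aftersetAut_le : ∀ w q, Fword (aftersetAut M ε Z) w q ≤ Fword M w q ⊔ ε
  | [], q => by
    rw [Fword_nil, aftersetAut_F]
    exact sup_le (by simpa only [Fword_nil] using hinv [] q) le_sup_right
  | σ :: u, q =>
    calc Fword (aftersetAut M ε Z) (σ :: u) q
        = ⨆ p, (aftersetAut M ε Z).δ q σ p * Fword (aftersetAut M ε Z) u p := Fword_cons ..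
      _ ≤ (⨆ t, (⨆ s, Z q s * M.δ s σ t) * Fword M u t) ⊔ ε :=
          iSup_mul_le_of_invariant (hinv u) (fun p => (aftersetAut_δ M ε Z q σ p).le)
            (Fword_aftersetAut_le u)
      _ = (⨆ s, Z q s * Fword M (σ :: u) s) ⊔ ε := by simp only [iSup_iSup_mul_assoc, Fword_cons]
      _ ≤ Fword M (σ :: u) q ⊔ ε := sup_le (hinv _ q) le_sup_right

lemma lang_aftersetAut_le (w : List S) : lang (aftersetAut M ε Z) w ≤ lang M w ⊔ ε := by
  simp only [lang_eq_iSup_mul_Fword]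
  exact iSup_mul_le_of_invariant (hinv w) (fun p => (aftersetAut_I M ε Z p).le)
    (Fword_aftersetAut_le hinv w)

end Afterset

end Automaton

theorem stmt_19_general {Q S : Type*} (M : FuzzyAutomaton L Q S) (ε : L) (Z : Q → Q → L)
    (hinv : RightEInv M ε Z) :
    ∀ w : List S, eqE ε (lang (aftersetAut M ε Z) w) (lang M w) := by
  obtain ⟨hrefl, hinvE⟩ := hinv
  have hinv' : ∀ w q, ⨆ p, Z q p * Fword M w p ≤ Fword M w q ⊔ ε :=
    fun w q => leE_iff_le_sup.mp (hinvE w q).1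
  exact fun w => ⟨leE_iff_le_sup.mpr (lang_aftersetAut_le hinv' w),
    Or.inl (lang_le_lang_aftersetAut hrefl w)⟩

theorem stmt_19 {Q S : Type*} (M : FuzzyAutomaton L Q S) (ε : L) (Z : Q → Q → L)
    (hfpo : IsEFPO ε Z) (hinv : RightEInv M ε Z) :
    ∀ w : List S, eqE ε (lang (aftersetAut M ε Z) w) (lang M w) :=
  stmt_19_general M ε Z hinv
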